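/- Let R be a commutative ring with identity and M a maximal ideal of R. Then R(+)M is a maximal subring of the idealization R(+)R. In particular, R(+)R always has a maximal subring. -/

import Mathlib

open TrivSqZeroExt in
/-- The subring `R(+)I` of the idealization `R(+)R`. -/
def idealize (R : Type*) [CommRing R] (I : Ideal R) : Subring (TrivSqZeroExt R R) where
  carrier := {x | x.snd ∈ I}
  zero_mem' := by simp
  one_mem' := by simp
  add_mem' := by intro x y hx hy; simpa using I.add_mem hx hy
  neg_mem' := by intro x hx; simpa using I.neg_mem hx
  mul_mem' := by
    intro x y hx hy
    simp only [Set.mem_setOf_eq, TrivSqZeroExt.snd_mul, op_smul_eq_smul] at *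
    exact I.add_mem (I.smul_mem _ hy) (I.smul_mem _ hx)

/-!
A subring `S` of `R(+)R` containing `R(+)M` contains `R`, so `S` is determined by the ideal
`{m | (0, m) ∈ S}`, namely `S = R(+)J`. This ideal contains `M`, and strictly so if `S` is larger
than `R(+)M`; maximality of `M` forces `J = R`, i.e. `S = R(+)R`.
-/

namespace TrivSqZeroExt

variable {R M : Type*} [Ring R] [AddCommGroup M] [Module R M] [Module Rᵐᵒᵖ M]

def inrSubmodule (S : Subring (TrivSqZeroExt R M)) (hS : ∀ r : R, inl r ∈ S) :
    Submodule R M where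
  carrier := {m | inr m ∈ S}
  zero_mem' := by simp
  add_mem' {m n} hm hn := by simpa [inr_add] using S.add_mem hm hn
  smul_mem' r m hm := by simpa [inl_mul_inr] using S.mul_mem (hS r) hm

theorem mem_inrSubmodule {S : Subring (TrivSqZeroExt R M)} {hS : ∀ r : R, inl r ∈ S} {m : M} :
    m ∈ inrSubmodule S hS ↔ inr m ∈ S :=
  Iff.rfl

theorem mem_subring_iff_snd_mem_inrSubmodule {S : Subring (TrivSqZeroExt R M)}
    (hS : ∀ r : R, inl r ∈ S) {x : TrivSqZeroExt R M} :
    x ∈ S ↔ x.snd ∈ inrSubmodule S hS := by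
  rw [mem_inrSubmodule, ← add_mem_cancel_left (hS x.fst) (y := inr x.snd), inl_fst_add_inr_snd_eq]

end TrivSqZeroExt

open TrivSqZeroExt

theorem mem_idealize {R : Type*} [CommRing R] {I : Ideal R} {x : TrivSqZeroExt R R} :
    x ∈ idealize R I ↔ x.snd ∈ I :=
  Iff.rfl

theorem idealize_isCoatom {R : Type*} [CommRing R] {M : Ideal R} (hM : M.IsMaximal) :
    IsCoatom (idealize R M) := by
  refine ⟨fun h => hM.ne_top ((Ideal.eq_top_iff_one M).2 ?_), fun S hlt => ?_⟩
  · exact mem_idealize.1 (h ▸ Subring.mem_top (inr (1 : R)))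
  have hinl (r : R) : inl r ∈ S := hlt.le (by simp [mem_idealize])
  have hM_le : M ≤ inrSubmodule S hinl := fun m hm => hlt.le (by simpa [mem_idealize] using hm)
  obtain ⟨b, hbS, hbM⟩ := SetLike.exists_of_lt hlt
  have hb : b.snd ∈ inrSubmodule S hinl := (mem_subring_iff_snd_mem_inrSubmodule hinl).1 hbS
  have hJ : inrSubmodule S hinl = ⊤ :=
    hM.out.2 _ (lt_of_le_of_ne hM_le fun h => hbM (mem_idealize.2 (h ▸ hb)))
  exact eq_top_iff.2 fun x _ => (mem_subring_iff_snd_mem_inrSubmodule hinl).2 (hJ ▸ trivial)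

/-- If `M` is a maximal ideal of `R`, then `R(+)M` is a maximal subring of `R(+)R`.
In particular `R(+)R` always has a maximal subring. -/
theorem stmt_4 (R : Type*) [CommRing R] (M : Ideal R) (hM : M.IsMaximal) :
    IsCoatom (idealize R M) ∧ ∃ S : Subring (TrivSqZeroExt R R), IsCoatom S :=
  ⟨idealize_isCoatom hM, _, idealize_isCoatom hM⟩
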